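/- On ℝ⁶ with coordinates (γ₁,γ₂,γ₃,M₁,M₂,M₃), let P₁, P₂, P₃ be the antisymmetric matrix fields with upper-triangular entries: P₁: (1,2) ↦ −M₃, (1,3) ↦ M₂, (1,5) ↦ −a/2, (2,3) ↦ −M₁, (2,4) ↦ a/2, others 0; P₂: (1,2) ↦ 2γ₃, (1,3) ↦ −2γ₂, (2,3) ↦ 2γ₁, (4,5) ↦ −a, others 0; P₃: (i,j) ↦ 0 for i,j ≤ 3, (i,j+3) ↦ ∑_k ε_{ijk}γ_k, (i+3,j+3) ↦ ∑_k ε_{ijk}M_k for i,j ∈ {1,2,3}. Then P₁, P₂, P₃ are mutually compatible Poisson bivectors: for all λ₁, λ₂, λ₃ ∈ ℝ the matrix field P = λ₁P₁ + λ₂P₂ + λ₃P₃ satisfies the Jacobi identity ∑_{l=1}^{6} ( P_{li} ∂P_{jk}/∂x_l + P_{lj} ∂P_{ki}/∂x_l + P_{lk} ∂P_{ij}/∂x_l ) = 0 for all i, j, k and all points. -/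

import Mathlib

noncomputable section

open scoped BigOperators

/-- Partial derivative of `f` in the `i`-th coordinate direction at `x`. -/
def pd {n : ℕ} (i : Fin n) (f : (Fin n → ℝ) → ℝ) (x : Fin n → ℝ) : ℝ :=
  fderiv ℝ f x (Pi.single i 1)

/-- The Lagrange vector field on `ℝ⁶` with coordinates
`(x₁,…,x₆) = (γ₁,γ₂,γ₃,M₁,M₂,M₃)`. -/
def lagX (a : ℝ) (x : Fin 6 → ℝ) : Fin 6 → ℝ :=
  ![2 * (x 2 * x 4 - x 1 * x 5), 2 * (x 0 * x 5 - x 2 * x 3),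
    2 * (x 1 * x 3 - x 0 * x 4), -(a * x 1), a * x 0, 0]

/-- `f₁ = γ₁² + γ₂² + γ₃²`. -/
def lagF₁ (x : Fin 6 → ℝ) : ℝ := x 0 ^ 2 + x 1 ^ 2 + x 2 ^ 2

/-- `f₂ = γ₁M₁ + γ₂M₂ + γ₃M₃`. -/
def lagF₂ (x : Fin 6 → ℝ) : ℝ := x 0 * x 3 + x 1 * x 4 + x 2 * x 5

/-- `f₃ = M₁² + M₂² + M₃² + aγ₃`. -/
def lagF₃ (a : ℝ) (x : Fin 6 → ℝ) : ℝ := x 3 ^ 2 + x 4 ^ 2 + x 5 ^ 2 + a * x 2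

/-- `f₄ = M₃`. -/
def lagF₄ (x : Fin 6 → ℝ) : ℝ := x 5

/-- Contraction of a matrix field with the gradient of a function:
`(P∇f)_i = ∑_j P_{ij} ∂f/∂x_j`. -/
def Pgrad {n : ℕ} (P : (Fin n → ℝ) → Matrix (Fin n) (Fin n) ℝ)
    (f : (Fin n → ℝ) → ℝ) (x : Fin n → ℝ) (i : Fin n) : ℝ :=
  ∑ j, P x i j * pd j f x

/-- Lie derivative of a (2,0) tensor (matrix field) `P` along the vector field `X`:
`(L_X P)_{ij} = ∑_k (X_k ∂P_{ij}/∂x_k − P_{kj} ∂X_i/∂x_k − P_{ik} ∂X_j/∂x_k)`. -/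
def matLie {n : ℕ} (X : (Fin n → ℝ) → Fin n → ℝ)
    (P : (Fin n → ℝ) → Matrix (Fin n) (Fin n) ℝ) (x : Fin n → ℝ) (i j : Fin n) : ℝ :=
  ∑ k, (X x k * pd k (fun y => P y i j) x - P x k j * pd k (fun y => X y i) x
        - P x i k * pd k (fun y => X y j) x)

/-- The Jacobiator of an antisymmetric matrix field; it vanishes identically iff `P`
satisfies the Jacobi identity (i.e. is a Poisson bivector). -/
def jacobiator {n : ℕ} (P : (Fin n → ℝ) → Matrix (Fin n) (Fin n) ℝ)
    (x : Fin n → ℝ) (i j k : Fin n) : ℝ :=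
  ∑ l, (P x l i * pd l (fun y => P y j k) x + P x l j * pd l (fun y => P y k i) x
        + P x l k * pd l (fun y => P y i j) x)

/-- The invariant Poisson bivector `P₁` of the Lagrange case: upper entries
`(1,2) ↦ −M₃`, `(1,3) ↦ M₂`, `(1,5) ↦ −a/2`, `(2,3) ↦ −M₁`, `(2,4) ↦ a/2`. -/
def lagP₁ (a : ℝ) (x : Fin 6 → ℝ) : Matrix (Fin 6) (Fin 6) ℝ :=
  !![0, -(x 5), x 4, 0, -(a / 2), 0;
     x 5, 0, -(x 3), a / 2, 0, 0;
     -(x 4), x 3, 0, 0, 0, 0;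
     0, -(a / 2), 0, 0, 0, 0;
     a / 2, 0, 0, 0, 0, 0;
     0, 0, 0, 0, 0, 0]

/-- The invariant Poisson bivector `P₂` of the Lagrange case: upper entries
`(1,2) ↦ 2γ₃`, `(1,3) ↦ −2γ₂`, `(2,3) ↦ 2γ₁`, `(4,5) ↦ −a`. -/
def lagP₂ (a : ℝ) (x : Fin 6 → ℝ) : Matrix (Fin 6) (Fin 6) ℝ :=
  !![0, 2 * x 2, -(2 * x 1), 0, 0, 0;
     -(2 * x 2), 0, 2 * x 0, 0, 0, 0;
     2 * x 1, -(2 * x 0), 0, 0, 0, 0;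
     0, 0, 0, 0, -a, 0;
     0, 0, 0, a, 0, 0;
     0, 0, 0, 0, 0, 0]

/-- The canonical Lie–Poisson bivector `P₃ = P_c` on `e*(3)`:
`(i,j) ↦ 0` for `i,j ≤ 3`, `(i,j+3) ↦ ∑_k ε_{ijk}γ_k`, `(i+3,j+3) ↦ ∑_k ε_{ijk}M_k`. -/
def lagP₃ (x : Fin 6 → ℝ) : Matrix (Fin 6) (Fin 6) ℝ :=
  !![0, 0, 0, 0, x 2, -(x 1);
     0, 0, 0, -(x 2), 0, x 0;
     0, 0, 0, x 1, -(x 0), 0;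
     0, x 2, -(x 1), 0, x 5, -(x 4);
     -(x 2), 0, x 0, -(x 5), 0, x 3;
     x 1, -(x 0), 0, x 4, -(x 3), 0]


/-!
Every member `λ₁P₁ + λ₂P₂ + λ₃P₃` of the pencil is affine in the coordinates,
`P(x) = P(0) + ∑ₘ xₘ Wₘ`, so its partial derivatives are the constant matrices `Wₘ` and its
Jacobiator is a polynomial in `x`, `a` and the `λᵢ`. For an antisymmetric field the Jacobiator is
totally antisymmetric in `i, j, k`, so it suffices to check that this polynomial vanishes for the
twenty triples `i < j < k`.
-/

section AffineField

variable {n : ℕ}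

def affineField (C : Matrix (Fin n) (Fin n) ℝ) (W : Fin n → Matrix (Fin n) (Fin n) ℝ)
    (y : Fin n → ℝ) : Matrix (Fin n) (Fin n) ℝ :=
  C + ∑ m, y m • W m

lemma pd_affineField_apply (C : Matrix (Fin n) (Fin n) ℝ) (W : Fin n → Matrix (Fin n) (Fin n) ℝ)
    (l i j : Fin n) (x : Fin n → ℝ) :
    pd l (fun y => affineField C W y i j) x = W l i j := by
  have h : HasFDerivAt (fun y => affineField C W y i j)
      (∑ m, W m i j • (ContinuousLinearMap.proj m : (Fin n → ℝ) →L[ℝ] ℝ)) x := by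
    simp only [affineField, Matrix.add_apply, Matrix.sum_apply, Matrix.smul_apply, smul_eq_mul]
    simpa using
      (HasFDerivAt.fun_sum fun m _ => (hasFDerivAt_apply m x).mul_const (W m i j)).const_add (C i j)
  simp [pd, h.fderiv, Pi.single_apply]

lemma jacobiator_of_eq_affineField {P : (Fin n → ℝ) → Matrix (Fin n) (Fin n) ℝ}
    {C : Matrix (Fin n) (Fin n) ℝ} {W : Fin n → Matrix (Fin n) (Fin n) ℝ}
    (hP : P = affineField C W) (x : Fin n → ℝ) (i j k : Fin n) :
    jacobiator P x i j k =
      ∑ l, (P x l i * W l j k + P x l j * W l k i + P x l k * W l i j) := by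
  subst hP
  simp only [jacobiator, pd_affineField_apply]

end AffineField

section Jacobiator

variable {n : ℕ} {P : (Fin n → ℝ) → Matrix (Fin n) (Fin n) ℝ}

lemma jacobiator_rotate (P : (Fin n → ℝ) → Matrix (Fin n) (Fin n) ℝ) (x : Fin n → ℝ)
    (i j k : Fin n) : jacobiator P x i j k = jacobiator P x j k i := by
  simp only [jacobiator]
  exact Finset.sum_congr rfl fun l _ => by ring

lemma pd_swap_of_antisymm (hP : ∀ y i j, P y j i = -P y i j) (l i j : Fin n)
    (x : Fin n → ℝ) : pd l (fun y => P y j i) x = -pd l (fun y => P y i j) x := by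
  rw [pd, pd, funext fun y => hP y i j, fderiv_fun_neg]
  rfl

lemma jacobiator_swap (hP : ∀ y i j, P y j i = -P y i j) (x : Fin n → ℝ) (i j k : Fin n) :
    jacobiator P x i k j = -jacobiator P x i j k := by
  simp only [jacobiator, ← Finset.sum_neg_distrib]
  refine Finset.sum_congr rfl fun l _ => ?_
  rw [pd_swap_of_antisymm hP l j k, pd_swap_of_antisymm hP l i j,
    pd_swap_of_antisymm hP l k i]
  ring

lemma jacobiator_eq_zero_of_forall_lt (hP : ∀ y i j, P y j i = -P y i j) (x : Fin n → ℝ)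
    (h : ∀ i j k, i < j → j < k → jacobiator P x i j k = 0) (i j k : Fin n) :
    jacobiator P x i j k = 0 := by
  have rot := jacobiator_rotate P x
  have swap := jacobiator_swap hP x
  have diag : ∀ i j, jacobiator P x i j j = 0 := fun i j => by linarith [swap i j j]
  have sorted : ∀ i j k, i ≤ j → j ≤ k → jacobiator P x i j k = 0 := by
    intro i j k hij hjk
    rcases hij.eq_or_lt with rfl | hij
    · rw [rot, rot, diag]
    rcases hjk.eq_or_lt with rfl | hjk
    · exact diag i j
    exact h i j k hij hjk
  rcases le_total i j with hij | hji <;> rcases le_total j k with hjk | hkj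
  · exact sorted i j k hij hjk
  · rcases le_total i k with hik | hki
    · linarith [sorted i k j hik hkj, swap i j k]
    · linarith [sorted k i j hki hij, rot i j k, rot j k i]
  · rcases le_total i k with hik | hki
    · linarith [sorted j i k hji hik, swap j i k, rot i j k]
    · linarith [sorted j k i hjk hki, rot i j k]
  · linarith [sorted k j i hkj hji, swap k j i, rot i j k, rot j k i]

end Jacobiator

def lagPencil (a l₁ l₂ l₃ : ℝ) (y : Fin 6 → ℝ) : Matrix (Fin 6) (Fin 6) ℝ :=
  l₁ • lagP₁ a y + l₂ • lagP₂ a y + l₃ • lagP₃ y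

section LagrangePencil

variable (a l₁ l₂ l₃ : ℝ)

lemma lagPencil_apply_swap (y : Fin 6 → ℝ) (i j : Fin 6) :
    lagPencil a l₁ l₂ l₃ y j i = -lagPencil a l₁ l₂ l₃ y i j := by
  fin_cases i <;> fin_cases j <;> simp [lagPencil, lagP₁, lagP₂, lagP₃] <;> ring

lemma lagPencil_eq_affineField :
    lagPencil a l₁ l₂ l₃ =
      affineField (lagPencil a l₁ l₂ l₃ 0) fun m => lagPencil 0 l₁ l₂ l₃ (Pi.single m 1) := by
  funext y
  ext i j
  simp only [affineField, Fin.sum_univ_six, lagPencil, lagP₁, lagP₂, lagP₃, Matrix.add_apply,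
    Matrix.smul_apply, Matrix.of_apply, smul_eq_mul]
  fin_cases i <;> fin_cases j <;> simp <;> ring

lemma lagPencil_jacobiator_of_lt (x : Fin 6 → ℝ) (i j k : Fin 6) (hij : i < j) (hjk : j < k) :
    jacobiator (lagPencil a l₁ l₂ l₃) x i j k = 0 := by
  rw [jacobiator_of_eq_affineField (lagPencil_eq_affineField a l₁ l₂ l₃)]
  simp only [Fin.sum_univ_six, lagPencil, lagP₁, lagP₂, lagP₃, Matrix.add_apply,
    Matrix.smul_apply, Matrix.of_apply, smul_eq_mul]
  fin_cases i <;> fin_cases j <;> fin_cases k <;> simp at hij hjk ⊢ <;> ring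

end LagrangePencil

/-- `P₁`, `P₂`, `P₃` are mutually compatible Poisson bivectors: every real linear
combination `λ₁P₁ + λ₂P₂ + λ₃P₃` satisfies the Jacobi identity. -/
theorem lagrange_bivectors_compatible (a l₁ l₂ l₃ : ℝ) (x : Fin 6 → ℝ)
    (i j k : Fin 6) :
    jacobiator (fun y => l₁ • lagP₁ a y + l₂ • lagP₂ a y + l₃ • lagP₃ y) x i j k = 0 :=
  jacobiator_eq_zero_of_forall_lt (lagPencil_apply_swap a l₁ l₂ l₃) x
    (lagPencil_jacobiator_of_lt a l₁ l₂ l₃ x) i j k
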